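/- Let w : ℝ³→ℝ³ be a Schwartz vector field. Then −∫_{ℝ³} Δw·(|w| w) dx = ∫_{ℝ³} |w| |∇w|² dx + ∫_{\{x : w(x)≠0\}} |w| |∇|w||² dx, where Δw is the componentwise Laplacian, |∇w|² = ∑_{i,j}(∂_j w_i)², and ∇|w| is the gradient of the scalar function x↦|w(x)| (defined on the open set where w≠0). In particular the second term equals (4/9)∫ |∇(|w|^{3/2})|² dx. -/

import Mathlib

noncomputable section
open MeasureTheory Real Filter Topology
open scoped ENNReal FourierTransform

/-- Physical space `ℝ³`. -/
abbrev E3 : Type := EuclideanSpace ℝ (Fin 3)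

/-- `j`-th spatial partial derivative of a scalar function on `ℝ³`. -/
def pd (j : Fin 3) (g : E3 → ℝ) (x : E3) : ℝ :=
  fderiv ℝ g x (EuclideanSpace.single j 1)

/-- Laplacian of a scalar function on `ℝ³`. -/
def lap (g : E3 → ℝ) (x : E3) : ℝ := ∑ j, pd j (pd j g) x

/-- The Elsasser system with diffusion coefficients `κ` and `lam`:
`∂ₜW⁺ − κΔW⁺ − λΔW⁻ + (W⁻·∇)W⁺ + ∇P = 0`,
`∂ₜW⁻ − κΔW⁻ − λΔW⁺ + (W⁺·∇)W⁻ + ∇P = 0`, `div W⁺ = div W⁻ = 0`,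
stated componentwise at time `t`. -/
def ElsasserEq (κ lam : ℝ) (Wp Wm : ℝ → E3 → E3) (P : ℝ → E3 → ℝ) (t : ℝ) : Prop :=
  (∀ x i, deriv (fun s => Wp s x i) t - κ * lap (fun y => Wp t y i) x
      - lam * lap (fun y => Wm t y i) x
      + (∑ j, Wm t x j * pd j (fun y => Wp t y i) x) + pd i (fun y => P t y) x = 0)
  ∧ (∀ x i, deriv (fun s => Wm s x i) t - κ * lap (fun y => Wm t y i) x
      - lam * lap (fun y => Wp t y i) x
      + (∑ j, Wp t x j * pd j (fun y => Wm t y i) x) + pd i (fun y => P t y) x = 0)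
  ∧ (∀ x, (∑ j, pd j (fun y => Wp t y j) x) = 0)
  ∧ (∀ x, (∑ j, pd j (fun y => Wm t y j) x) = 0)

/-- A smooth decaying solution of the Elsasser system on `ℝ³ × [0,T]`:
smooth jointly in space-time, Schwartz in `x` for each `t ∈ [0,T]`,
and satisfying the system pointwise. -/
def SmoothDecaySol (κ lam T : ℝ) (Wp Wm : ℝ → E3 → E3) (P : ℝ → E3 → ℝ) : Prop :=
  ContDiffOn ℝ (⊤ : ℕ∞) (fun q : ℝ × E3 => Wp q.1 q.2) (Set.Icc 0 T ×ˢ Set.univ)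
  ∧ ContDiffOn ℝ (⊤ : ℕ∞) (fun q : ℝ × E3 => Wm q.1 q.2) (Set.Icc 0 T ×ˢ Set.univ)
  ∧ ContDiffOn ℝ (⊤ : ℕ∞) (fun q : ℝ × E3 => P q.1 q.2) (Set.Icc 0 T ×ˢ Set.univ)
  ∧ (∀ t ∈ Set.Icc (0:ℝ) T,
      (∃ g : SchwartzMap E3 E3, ⇑g = Wp t) ∧ (∃ g : SchwartzMap E3 E3, ⇑g = Wm t)
        ∧ (∃ g : SchwartzMap E3 ℝ, ⇑g = P t))
  ∧ (∀ t ∈ Set.Ioo (0:ℝ) T, ElsasserEq κ lam Wp Wm P t)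

/-- Real-valued `L^p(ℝ³)` norm of a vector field. -/
def LpN (p : ℝ≥0∞) (f : E3 → E3) : ℝ := (eLpNorm f p volume).toReal

/-- Real-valued `L^p(ℝ³)` norm of a scalar function. -/
def LpNs (p : ℝ≥0∞) (f : E3 → ℝ) : ℝ := (eLpNorm f p volume).toReal

/-- The squared homogeneous Sobolev `Ḣ^s` norm of a vector field,
`‖f‖_{Ḣ^s}² = ∫ |ξ|^{2s} |𝓕f(ξ)|² dξ`, as an extended nonnegative real. -/
def hSobE (s : ℝ) (f : E3 → E3) : ℝ≥0∞ :=
  ∫⁻ ξ : E3, (‖ξ‖₊ : ℝ≥0∞) ^ (2 * s)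
      * ∑ j, ((‖𝓕 (fun x => (f x j : ℂ)) ξ‖₊ : ℝ≥0∞) ^ 2)

/-- The squared homogeneous Sobolev `Ḣ^s` norm, as a real number. -/
def sqHs (s : ℝ) (f : E3 → E3) : ℝ := (hSobE s f).toReal


open Asymptotics
open scoped NNReal
set_option synthInstance.maxHeartbeats 1000000
set_option maxHeartbeats 2000000

theorem abs_coord_le (x : E3) (i : Fin 3) : |x i| ≤ ‖x‖ := by
  have h := norm_inner_le_norm (𝕜 := ℝ) (EuclideanSpace.single i (1:ℝ)) x
  rw [EuclideanSpace.inner_single_left] at h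
  simpa [EuclideanSpace.norm_single] using h

theorem schwartz_bound (f : SchwartzMap E3 E3) : ∃ M, 0 ≤ M ∧ ∀ x, ‖f x‖ ≤ M := by
  obtain ⟨C, hC0, hC⟩ := f.decay 0 0
  exact ⟨C, hC0.le, fun x => by simpa using hC x⟩

theorem schwartz_fderiv_bound (f : SchwartzMap E3 E3) :
    ∃ M, 0 ≤ M ∧ ∀ x, ‖fderiv ℝ f x‖ ≤ M := by
  obtain ⟨C, hC0, hC⟩ := (SchwartzMap.fderivCLM ℝ E3 E3 f).decay 0 0
  exact ⟨C, hC0.le, fun x => by simpa [SchwartzMap.fderivCLM_apply] using hC x⟩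

theorem schwartz_lip (f : SchwartzMap E3 E3) : ∃ c : ℝ≥0, LipschitzWith c f := by
  obtain ⟨M, hM0, hM⟩ := schwartz_fderiv_bound f
  refine ⟨M.toNNReal, lipschitzWith_of_nnnorm_fderiv_le f.differentiable (fun x => ?_)⟩
  rw [← NNReal.coe_le_coe]
  simpa [Real.coe_toNNReal M hM0] using hM x

theorem comp_hasFDerivAt (f : SchwartzMap E3 E3) (i : Fin 3) (x : E3) :
    HasFDerivAt (fun y => f y i)
      ((EuclideanSpace.proj i : E3 →L[ℝ] ℝ).comp (fderiv ℝ f x)) x :=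
  (EuclideanSpace.proj i : E3 →L[ℝ] ℝ).hasFDerivAt.comp x (f.differentiable x).hasFDerivAt

theorem comp_diff (f : SchwartzMap E3 E3) (i : Fin 3) :
    Differentiable ℝ (fun y => f y i) := fun x => (comp_hasFDerivAt f i x).differentiableAt

theorem comp_int (f : SchwartzMap E3 E3) (i : Fin 3) :
    Integrable (fun x => f x i) volume := by
  have := ContinuousLinearMap.integrable_comp (EuclideanSpace.proj i : E3 →L[ℝ] ℝ)
    (f.integrable (μ := volume))
  simpa using this

theorem comp_lip (f : SchwartzMap E3 E3) (i : Fin 3) :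
    ∃ c : ℝ≥0, LipschitzWith c (fun y => f y i) := by
  obtain ⟨c, hc⟩ := schwartz_lip f
  exact ⟨_, (EuclideanSpace.proj i : E3 →L[ℝ] ℝ).lipschitz.comp hc⟩

theorem comp_bdd (f : SchwartzMap E3 E3) (i : Fin 3) :
    ∃ M, 0 ≤ M ∧ ∀ x, |f x i| ≤ M := by
  obtain ⟨M, hM0, hM⟩ := schwartz_bound f
  exact ⟨M, hM0, fun x => (abs_coord_le _ _).trans (hM x)⟩

theorem proj_opNorm_le (i : Fin 3) : ‖(EuclideanSpace.proj i : E3 →L[ℝ] ℝ)‖ ≤ 1 :=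
  ContinuousLinearMap.opNorm_le_bound _ zero_le_one
    (fun x => by simpa using abs_coord_le x i)

theorem hasFDerivAt_norm_comp (w : SchwartzMap E3 E3) (x : E3) (hx : w x ≠ 0) :
    HasFDerivAt (fun y => ‖w y‖)
      (‖w x‖⁻¹ • ((innerSL ℝ (w x)).comp (fderiv ℝ w x))) x := by
  have hnx : ‖w x‖ ≠ 0 := norm_ne_zero_iff.mpr hx
  have hq : HasFDerivAt (fun y => ‖w y‖ ^ 2)
      (2 • ((innerSL ℝ (w x)).comp (fderiv ℝ w x))) x :=
    (w.differentiable x).hasFDerivAt.norm_sq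
  have hs : HasDerivAt Real.sqrt (1 / (2 * Real.sqrt (‖w x‖ ^ 2))) (‖w x‖ ^ 2) := by
    apply Real.hasDerivAt_sqrt
    positivity
  have h := hs.comp_hasFDerivAt x hq
  have hfun : (Real.sqrt ∘ fun y => ‖w y‖ ^ 2) = fun y => ‖w y‖ := by
    funext y; simp [Function.comp, Real.sqrt_sq (norm_nonneg _)]
  rw [hfun] at h
  refine h.congr_fderiv (Eq.symm ?_)
  rw [Real.sqrt_sq (norm_nonneg _)]
  ext v
  simp only [ContinuousLinearMap.coe_smul', Pi.smul_apply, smul_eq_mul,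
    ContinuousLinearMap.smul_apply]
  field_simp
  ring

theorem hasFDerivAt_F_zero (w : SchwartzMap E3 E3) {C : ℝ≥0} (hw : LipschitzWith C w)
    (i : Fin 3) (x : E3) (hx : w x = 0) :
    HasFDerivAt (fun y => ‖w y‖ * w y i) (0 : E3 →L[ℝ] ℝ) x := by
  rw [hasFDerivAt_iff_isLittleO_nhds_zero]
  have h1 : (fun h : E3 => ‖w (x + h)‖ * w (x + h) i - ‖w x‖ * w x i - (0 : E3 →L[ℝ] ℝ) h)
      =O[𝓝 0] (fun h : E3 => ‖w (x + h)‖ * ‖w (x + h)‖) := by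
    apply IsBigO.of_bound'
    filter_upwards with h
    simp only [hx, norm_zero, zero_mul, ContinuousLinearMap.zero_apply, sub_zero, norm_mul,
      norm_norm, Real.norm_eq_abs, abs_mul, abs_norm, abs_abs]
    exact mul_le_mul_of_nonneg_left (abs_coord_le _ _) (norm_nonneg _)
  refine h1.trans_isLittleO ?_
  have h2 : (fun h : E3 => ‖w (x + h)‖) =o[𝓝 0] (fun _ : E3 => (1:ℝ)) := by
    rw [isLittleO_const_iff one_ne_zero]
    have : Continuous fun h : E3 => ‖w (x + h)‖ :=
      (w.continuous.comp (continuous_add_left x)).norm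
    simpa [hx] using this.tendsto 0
  have h3 : (fun h : E3 => ‖w (x + h)‖) =O[𝓝 0] (fun h : E3 => ‖h‖) := by
    apply IsBigO.of_bound C
    filter_upwards with h
    have : ‖w (x + h) - w x‖ ≤ C * ‖x + h - x‖ := hw.norm_sub_le _ _
    simpa [hx, norm_norm] using this
  have h4 := h2.mul_isBigO h3
  simp only [one_mul] at h4
  exact isLittleO_norm_right.mp h4

theorem hasFDerivAt_F_ne (w : SchwartzMap E3 E3) (i : Fin 3) (x : E3) (hx : w x ≠ 0) :
    HasFDerivAt (fun y => ‖w y‖ * w y i)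
      (‖w x‖ • ((EuclideanSpace.proj i : E3 →L[ℝ] ℝ).comp (fderiv ℝ w x))
        + w x i • (‖w x‖⁻¹ • ((innerSL ℝ (w x)).comp (fderiv ℝ w x)))) x := by
  have h := (hasFDerivAt_norm_comp w x hx).mul (comp_hasFDerivAt w i x)
  exact h

theorem F_fderiv_val (w : SchwartzMap E3 E3) (i : Fin 3) (x : E3) (hx : w x ≠ 0) (v : E3) :
    fderiv ℝ (fun y => ‖w y‖ * w y i) x v
      = ‖w x‖ * (fderiv ℝ w x v i) + w x i * (‖w x‖⁻¹ * inner ℝ (w x) (fderiv ℝ w x v)) := by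
  rw [(hasFDerivAt_F_ne w i x hx).fderiv]
  simp [ContinuousLinearMap.comp_apply, mul_comm]

theorem F_fderiv_bound (w : SchwartzMap E3 E3) {C : ℝ≥0} (hw : LipschitzWith C w)
    {M0 M1 : ℝ} (h0 : 0 ≤ M0) (h1 : 0 ≤ M1)
    (hM0 : ∀ x, ‖w x‖ ≤ M0) (hM1 : ∀ x, ‖fderiv ℝ w x‖ ≤ M1) (i : Fin 3) (x : E3) :
    ‖fderiv ℝ (fun y => ‖w y‖ * w y i) x‖ ≤ 2 * (M0 * M1) := by
  by_cases hx : w x = 0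
  · rw [(hasFDerivAt_F_zero w hw i x hx).fderiv]
    simp; positivity
  · rw [(hasFDerivAt_F_ne w i x hx).fderiv]
    have hWn : ‖w x‖ ≠ 0 := norm_ne_zero_iff.mpr hx
    have b1 : ‖‖w x‖ • ((EuclideanSpace.proj i : E3 →L[ℝ] ℝ).comp (fderiv ℝ w x))‖
        ≤ M0 * M1 := by
      rw [norm_smul (β := E3 →L[ℝ] ℝ)]; rw [norm_norm]
      calc ‖w x‖ * ‖(EuclideanSpace.proj i : E3 →L[ℝ] ℝ).comp (fderiv ℝ w x)‖
          ≤ M0 * (1 * M1) := by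
            apply mul_le_mul (hM0 x) ?_ (norm_nonneg _) h0
            exact (ContinuousLinearMap.opNorm_comp_le _ _).trans
              (mul_le_mul (proj_opNorm_le i) (hM1 x) (norm_nonneg _) zero_le_one)
        _ = M0 * M1 := by ring
    have b2 : ‖w x i • (‖w x‖⁻¹ • ((innerSL ℝ (w x)).comp (fderiv ℝ w x)))‖
        ≤ M0 * M1 := by
      rw [norm_smul (β := E3 →L[ℝ] ℝ), norm_smul (β := E3 →L[ℝ] ℝ)]
      simp only [Real.norm_eq_abs, abs_inv, abs_norm]
      have hD : ‖(innerSL ℝ (w x)).comp (fderiv ℝ w x)‖ ≤ ‖w x‖ * M1 :=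
        (ContinuousLinearMap.opNorm_comp_le _ _).trans
          (by rw [innerSL_apply_norm]; exact mul_le_mul_of_nonneg_left (hM1 x) (norm_nonneg _))
      calc |w x i| * (‖w x‖⁻¹ * ‖(innerSL ℝ (w x)).comp (fderiv ℝ w x)‖)
          ≤ M0 * (‖w x‖⁻¹ * (‖w x‖ * M1)) := by
            apply mul_le_mul ((abs_coord_le _ _).trans (hM0 x)) ?_ (by positivity) h0
            exact mul_le_mul_of_nonneg_left hD (by positivity)
        _ = M0 * M1 := by field_simp
    calc _ ≤ _ := norm_add_le _ _
      _ ≤ M0 * M1 + M0 * M1 := add_le_add b1 b2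
      _ = 2 * (M0 * M1) := by ring

theorem pd_rpow_val (w : SchwartzMap E3 E3) (x : E3) (v : E3) :
    fderiv ℝ (fun y => ‖w y‖ ^ (3/2:ℝ)) x v
      = (3/2) * ‖w x‖ ^ (-(1/2):ℝ) * inner ℝ (w x) (fderiv ℝ w x v) := by
  have hp : (1:ℝ) < 3/2 := by norm_num
  have h := (hasFDerivAt_norm_rpow (w x) hp).comp x (w.differentiable x).hasFDerivAt
  have h' : HasFDerivAt (fun y => ‖w y‖ ^ (3/2:ℝ))
      (((3 / 2 * ‖w x‖ ^ (3 / 2 - 2 : ℝ)) • (innerSL ℝ) (w x)).comp (fderiv ℝ (⇑w) x)) x := h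
  rw [h'.fderiv]
  have : (3/2 - 2 : ℝ) = -(1/2) := by norm_num
  simp [ContinuousLinearMap.comp_apply, this, mul_assoc]

theorem my_ibp {f g : E3 → ℝ} {C D : ℝ≥0} {Mf Mg : ℝ}
    (hf : LipschitzWith C f) (hfi : Integrable f) (hfb : ∀ x, |f x| ≤ Mf)
    (hg : LipschitzWith D g) (hgi : Integrable g) (hgb : ∀ x, |g x| ≤ Mg) (v : E3) :
    ∫ x, lineDeriv ℝ f x v * g x = ∫ x, lineDeriv ℝ g x (-v) * f x := by
  have A := LipschitzWith.integral_inv_smul_sub_mul_tendsto_integral_lineDeriv_mul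
    (μ := volume) hf hgi v
  have B := LipschitzWith.integral_inv_smul_sub_mul_tendsto_integral_lineDeriv_mul
    (μ := volume) hg hfi (-v)
  suffices S1 : ∀ (t : ℝ), ∫ x, (t⁻¹ • (f (x + t • v) - f x)) * g x =
      ∫ x, (t⁻¹ • (g (x + t • (-v)) - g x)) * f x by
    simp only [S1] at A; exact tendsto_nhds_unique A B
  intro t
  have hfm : AEStronglyMeasurable f volume := hf.continuous.aestronglyMeasurable
  have hfm' : AEStronglyMeasurable (fun x => f (x + t • v)) volume :=
    (hf.continuous.comp (continuous_add_right _)).aestronglyMeasurable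
  have i1 : Integrable (fun x => f (x + t • v) * g x) :=
    hgi.bdd_mul hfm' (c := Mf) (ae_of_all _ fun x => hfb _)
  have i2 : Integrable (fun x => f x * g x) := hgi.bdd_mul hfm (c := Mf) (ae_of_all _ fun x => hfb _)
  have i3 : Integrable (fun x => f x * g (x + t • (-v))) := by
    have : Integrable (fun x => g (x + t • (-v))) := hgi.comp_add_right _
    simpa [mul_comm] using this.bdd_mul hfm (c := Mf) (ae_of_all _ fun x => hfb _)
  suffices S2 : ∫ x, (f (x + t • v) - f x) * g x = ∫ x, f x * (g (x + t • (-v)) - g x) by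
    simp only [smul_eq_mul, mul_assoc, integral_const_mul, S2, mul_comm (f _)]
  have S3 : ∫ x, f (x + t • v) * g x = ∫ x, f x * g (x + t • (-v)) := by
    rw [← integral_add_right_eq_self (fun x => f (x + t • v) * g x) (t • (-v))]
    simp
  simp_rw [_root_.sub_mul, _root_.mul_sub]
  rw [integral_sub i1 i2, integral_sub i3 i2, S3]

theorem my_ibp_fderiv {f g : E3 → ℝ} {C D : ℝ≥0} {Mf Mg : ℝ}
    (hf : LipschitzWith C f) (hfi : Integrable f) (hfb : ∀ x, |f x| ≤ Mf)
    (hfd : Differentiable ℝ f)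
    (hg : LipschitzWith D g) (hgi : Integrable g) (hgb : ∀ x, |g x| ≤ Mg)
    (hgd : Differentiable ℝ g) (v : E3) :
    ∫ x, fderiv ℝ f x v * g x = -∫ x, f x * fderiv ℝ g x v := by
  have h := my_ibp hf hfi hfb hg hgi hgb v
  have e1 : ∀ x, lineDeriv ℝ f x v = fderiv ℝ f x v := fun x => (hfd x).lineDeriv_eq_fderiv
  have e2 : ∀ x, lineDeriv ℝ g x (-v) = -(fderiv ℝ g x v) := fun x => by
    rw [(hgd x).lineDeriv_eq_fderiv, map_neg]
  simp only [e1, e2, neg_mul] at h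
  rw [h, ← integral_neg]
  congr 1; ext x; ring


/-- the dissipation identity
`−∫ Δw·(|w| w) dx = ∫ |w||∇w|² dx + ∫_{w≠0} |w| |∇|w||² dx`, and
the second term equals `(4/9)∫ |∇(|w|^{3/2})|² dx`. -/
theorem dissipation_identity (w : SchwartzMap E3 E3) :
    (-∫ x, ∑ i, lap (fun y => w y i) x * (‖w x‖ * w x i)
        = (∫ x, ‖w x‖ * ∑ i, ∑ j, (pd j (fun y => w y i) x) ^ 2)
          + ∫ x in {x : E3 | w x ≠ 0}, ‖w x‖ * ∑ j, (pd j (fun y => ‖w y‖) x) ^ 2)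
    ∧ (∫ x in {x : E3 | w x ≠ 0}, ‖w x‖ * ∑ j, (pd j (fun y => ‖w y‖) x) ^ 2)
        = (4/9) * ∫ x, ∑ j, (pd j (fun y => ‖w y‖ ^ (3/2 : ℝ)) x) ^ 2 := by
  classical
  obtain ⟨M0, hM00, hM0⟩ := schwartz_bound w
  obtain ⟨M1, hM10, hM1⟩ := schwartz_fderiv_bound w
  obtain ⟨Cw, hCw⟩ := schwartz_lip w
  set s : Set E3 := {x : E3 | w x ≠ 0} with hs_def
  have hs_meas : MeasurableSet s := by
    have : s = (⇑w) ⁻¹' ({0}ᶜ) := rfl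
    rw [this]
    exact (isOpen_compl_singleton.preimage w.continuous).measurableSet
  set e : Fin 3 → E3 := fun j => EuclideanSpace.single j 1 with he_def
  set w1 : Fin 3 → SchwartzMap E3 E3 := fun j => LineDeriv.lineDerivOpCLM ℝ (SchwartzMap E3 E3) (e j) w with hw1_def
  set w2 : Fin 3 → SchwartzMap E3 E3 := fun j => LineDeriv.lineDerivOpCLM ℝ (SchwartzMap E3 E3) (e j) (w1 j)
    with hw2_def
  have hw1 : ∀ j x, w1 j x = fderiv ℝ w x (e j) := fun j x => rfl
  have hw2 : ∀ j x, w2 j x = fderiv ℝ (w1 j) x (e j) := fun j x => rfl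
  have hpdw : ∀ i j x, pd j (fun y => w y i) x = w1 j x i := by
    intro i j x
    show fderiv ℝ (fun y => w y i) x (e j) = w1 j x i
    rw [(comp_hasFDerivAt w i x).fderiv, hw1]
    rfl
  have hpdw_fun : ∀ i j, pd j (fun y => w y i) = fun x => w1 j x i :=
    fun i j => funext (hpdw i j)
  have hpd2 : ∀ i j x, pd j (pd j (fun y => w y i)) x = w2 j x i := by
    intro i j x
    rw [hpdw_fun i j]
    show fderiv ℝ (fun y => w1 j y i) x (e j) = w2 j x i
    rw [(comp_hasFDerivAt (w1 j) i x).fderiv, hw2]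
    rfl
  have hlap : ∀ i x, lap (fun y => w y i) x = ∑ j, w2 j x i := by
    intro i x
    exact Finset.sum_congr rfl (fun j _ => hpd2 i j x)
  -- F and its properties
  set F : Fin 3 → E3 → ℝ := fun i x => ‖w x‖ * w x i with hF_def
  have hFdiff : ∀ i, Differentiable ℝ (F i) := by
    intro i x
    by_cases hx : w x = 0
    · exact (hasFDerivAt_F_zero w hCw i x hx).differentiableAt
    · exact (hasFDerivAt_F_ne w i x hx).differentiableAt
  have hFbound : ∀ i x, ‖fderiv ℝ (F i) x‖ ≤ 2 * (M0 * M1) := fun i x =>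
    F_fderiv_bound w hCw hM00 hM10 hM0 hM1 i x
  have hFlip : ∀ i, LipschitzWith (2 * (M0 * M1)).toNNReal (F i) := fun i =>
    lipschitzWith_of_nnnorm_fderiv_le (hFdiff i) (fun x => by
      rw [← NNReal.coe_le_coe]
      have h20 : (0:ℝ) ≤ 2 * (M0 * M1) := by positivity
      simpa [Real.coe_toNNReal _ h20] using hFbound i x)
  have hnmeas : AEStronglyMeasurable (fun x : E3 => ‖w x‖) volume :=
    (w.continuous.norm).aestronglyMeasurable
  have hFint : ∀ i, Integrable (F i) volume := fun i =>
    (comp_int w i).bdd_mul hnmeas (c := M0) (ae_of_all _ fun x => by simpa using hM0 x)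
  have hFbdd : ∀ i x, |F i x| ≤ M0 * M0 := by
    intro i x
    rw [hF_def]
    simp only [abs_mul, abs_norm]
    exact mul_le_mul (hM0 x) ((abs_coord_le _ _).trans (hM0 x)) (abs_nonneg _) hM00
  -- IBP
  have key : ∀ i j, ∫ x, F i x * w2 j x i = -∫ x, fderiv ℝ (F i) x (e j) * w1 j x i := by
    intro i j
    obtain ⟨cg, hcg⟩ := comp_lip (w1 j) i
    obtain ⟨Mg, hMg0, hMg⟩ := comp_bdd (w1 j) i
    have h := my_ibp_fderiv (hFlip i) (hFint i) (hFbdd i) (hFdiff i)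
      hcg (comp_int (w1 j) i) hMg (comp_diff (w1 j) i) (e j)
    have hg' : ∀ x, fderiv ℝ (fun y => w1 j y i) x (e j) = w2 j x i := by
      intro x
      rw [(comp_hasFDerivAt (w1 j) i x).fderiv, hw2]
      rfl
    simp only [hg'] at h
    linarith [h]
  -- integrability facts
  have hw1sqint : ∀ i j, Integrable (fun x => (w1 j x i) ^ 2) volume := by
    intro i j
    obtain ⟨Mg, hMg0, hMg⟩ := comp_bdd (w1 j) i
    have meas : AEStronglyMeasurable (fun x => w1 j x i) volume :=
      (comp_diff (w1 j) i).continuous.aestronglyMeasurable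
    have := (comp_int (w1 j) i).bdd_mul meas (c := Mg) (ae_of_all _ fun x => by simpa using hMg x)
    have heq : (fun x => w1 j x i * w1 j x i) = fun x => (w1 j x i) ^ 2 := by
      funext x; ring
    rwa [heq] at this
  have hsqint : Integrable (fun x => ∑ i, ∑ j, (w1 j x i) ^ 2) volume :=
    integrable_finset_sum _ (fun i _ => integrable_finset_sum _ (fun j _ => hw1sqint i j))
  have h1int : Integrable (fun x => ‖w x‖ * ∑ i, ∑ j, (w1 j x i) ^ 2) volume :=
    hsqint.bdd_mul hnmeas (c := M0) (ae_of_all _ fun x => by simpa using hM0 x)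
  have hFw2int : ∀ i j, Integrable (fun x => F i x * w2 j x i) volume := by
    intro i j
    exact (comp_int (w2 j) i).bdd_mul ((hFlip i).continuous).aestronglyMeasurable
      (c := M0 * M0) (ae_of_all _ fun x => by simpa using hFbdd i x)
  have hpdFint : ∀ i j, Integrable (fun x => fderiv ℝ (F i) x (e j) * w1 j x i) volume := by
    intro i j
    refine (comp_int (w1 j) i).bdd_mul ?_ (c := 2 * (M0 * M1)) (ae_of_all _ fun x => ?_)
    · exact (measurable_fderiv_apply_const ℝ (F i) (e j)).aestronglyMeasurable
    · calc ‖fderiv ℝ (F i) x (e j)‖ ≤ ‖fderiv ℝ (F i) x‖ * ‖e j‖ :=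
          ContinuousLinearMap.le_opNorm _ _
        _ ≤ 2 * (M0 * M1) * 1 := by
            refine mul_le_mul (hFbound i x) ?_ (norm_nonneg _) (by positivity)
            rw [he_def]
            simp [EuclideanSpace.norm_single]
        _ = 2 * (M0 * M1) := by ring
  have hLint : Integrable (fun x => ∑ i, ∑ j, fderiv ℝ (F i) x (e j) * w1 j x i) volume :=
    integrable_finset_sum _ (fun i _ => integrable_finset_sum _ (fun j _ => hpdFint i j))
  -- step 1
  have e1 : ∀ x, ∑ i, lap (fun y => w y i) x * (‖w x‖ * w x i) = ∑ i, ∑ j, F i x * w2 j x i := by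
    intro x
    refine Finset.sum_congr rfl fun i _ => ?_
    rw [hlap i x, Finset.sum_mul]
    exact Finset.sum_congr rfl fun j _ => mul_comm _ _
  have step1 : -∫ x, ∑ i, lap (fun y => w y i) x * (‖w x‖ * w x i)
      = ∫ x, ∑ i, ∑ j, fderiv ℝ (F i) x (e j) * w1 j x i := by
    have A : ∫ x, ∑ i, lap (fun y => w y i) x * (‖w x‖ * w x i)
        = ∑ i, ∑ j, ∫ x, F i x * w2 j x i := by
      rw [integral_congr_ae (Filter.Eventually.of_forall e1)]
      rw [integral_finset_sum _ (fun i _ => integrable_finset_sum _ (fun j _ => hFw2int i j))]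
      exact Finset.sum_congr rfl fun i _ => integral_finset_sum _ (fun j _ => hFw2int i j)
    have B : ∫ x, ∑ i, ∑ j, fderiv ℝ (F i) x (e j) * w1 j x i
        = ∑ i, ∑ j, ∫ x, fderiv ℝ (F i) x (e j) * w1 j x i := by
      rw [integral_finset_sum _ (fun i _ => integrable_finset_sum _ (fun j _ => hpdFint i j))]
      exact Finset.sum_congr rfl fun i _ => integral_finset_sum _ (fun j _ => hpdFint i j)
    rw [A, B]
    have : ∀ i ∈ Finset.univ, ∀ j ∈ Finset.univ,
        ∫ x, fderiv ℝ (F i) x (e j) * w1 j x i = -∫ x, F i x * w2 j x i := by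
      intro i _ j _
      rw [key i j]; ring
    rw [Finset.sum_congr rfl (fun i hi => Finset.sum_congr rfl (fun j hj => this i hi j hj))]
    simp [Finset.sum_neg_distrib]
  -- pointwise identities
  set G : E3 → ℝ := fun x => ‖w x‖ * ∑ j, (pd j (fun y => ‖w y‖) x) ^ 2 with hG_def
  have hpdn : ∀ j x, w x ≠ 0 → pd j (fun y => ‖w y‖) x = ‖w x‖⁻¹ * inner ℝ (w x) (w1 j x) := by
    intro j x hx
    show fderiv ℝ (fun y => ‖w y‖) x (e j) = _
    rw [(hasFDerivAt_norm_comp w x hx).fderiv]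
    simp only [ContinuousLinearMap.coe_smul', Pi.smul_apply, ContinuousLinearMap.comp_apply,
      innerSL_apply_apply, smul_eq_mul]
    rfl
  have hinner : ∀ j x, (inner ℝ (w x) (w1 j x) : ℝ) = ∑ i, w x i * w1 j x i := by
    intro j x
    simp [PiLp.inner_apply, RCLike.inner_apply, mul_comm]
  have hP : ∀ x, ∑ i, ∑ j, fderiv ℝ (F i) x (e j) * w1 j x i
      = ‖w x‖ * (∑ i, ∑ j, (w1 j x i) ^ 2) + s.indicator G x := by
    intro x
    by_cases hx : w x = 0
    · have hz : ∀ i, fderiv ℝ (F i) x = 0 := fun i => (hasFDerivAt_F_zero w hCw i x hx).fderiv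
      have hxs : x ∉ s := by simp [hs_def, hx]
      rw [Set.indicator_of_notMem hxs]
      simp [hz, hx]
    · have hn0 : ‖w x‖ ≠ 0 := norm_ne_zero_iff.mpr hx
      rw [Set.indicator_of_mem (show x ∈ s from hx)]
      have hfd : ∀ i j, fderiv ℝ (F i) x (e j)
          = ‖w x‖ * w1 j x i + w x i * (‖w x‖⁻¹ * inner ℝ (w x) (w1 j x)) :=
        fun i j => F_fderiv_val w i x hx (e j)
      calc ∑ i, ∑ j, fderiv ℝ (F i) x (e j) * w1 j x i
          = ∑ i, ∑ j, (‖w x‖ * (w1 j x i) ^ 2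
              + (‖w x‖⁻¹ * inner ℝ (w x) (w1 j x)) * (w x i * w1 j x i)) := by
            refine Finset.sum_congr rfl fun i _ => Finset.sum_congr rfl fun j _ => ?_
            rw [hfd i j]; ring
        _ = (∑ i, ∑ j, ‖w x‖ * (w1 j x i) ^ 2)
              + ∑ j, ∑ i, (‖w x‖⁻¹ * inner ℝ (w x) (w1 j x)) * (w x i * w1 j x i) := by
            simp only [Finset.sum_add_distrib]
            congr 1
            rw [Finset.sum_comm]
        _ = ‖w x‖ * (∑ i, ∑ j, (w1 j x i) ^ 2)
              + ∑ j, (‖w x‖⁻¹ * inner ℝ (w x) (w1 j x)) * inner ℝ (w x) (w1 j x) := by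
            congr 1
            · simp only [Finset.mul_sum]
            · refine Finset.sum_congr rfl fun j _ => ?_
              rw [← Finset.mul_sum, ← hinner j x]
        _ = ‖w x‖ * (∑ i, ∑ j, (w1 j x i) ^ 2)
              + ‖w x‖ * ∑ j, (‖w x‖⁻¹ * inner ℝ (w x) (w1 j x)) ^ 2 := by
            congr 1
            rw [Finset.mul_sum]
            refine Finset.sum_congr rfl fun j _ => ?_
            field_simp
        _ = ‖w x‖ * (∑ i, ∑ j, (w1 j x i) ^ 2) + G x := by
            congr 1
            rw [hG_def]
            congr 1
            exact Finset.sum_congr rfl fun j _ => by rw [hpdn j x hx]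
  have hGind : Integrable (s.indicator G) volume := by
    have heq : s.indicator G = fun x => (∑ i, ∑ j, fderiv ℝ (F i) x (e j) * w1 j x i)
        - ‖w x‖ * ∑ i, ∑ j, (w1 j x i) ^ 2 := by
      funext x
      have := hP x
      linarith
    rw [heq]
    exact hLint.sub h1int
  constructor
  · rw [step1, integral_congr_ae (Filter.Eventually.of_forall hP),
      integral_add h1int hGind, integral_indicator hs_meas]
    congr 1
    refine integral_congr_ae (Filter.Eventually.of_forall fun x => ?_)
    simp only [hpdw]
  · -- claim 2
    have hpd32 : ∀ j x, pd j (fun y => ‖w y‖ ^ (3/2:ℝ)) x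
        = (3/2) * ‖w x‖ ^ (-(1/2):ℝ) * inner ℝ (w x) (w1 j x) :=
      fun j x => pd_rpow_val w x (e j)
    have hP2 : ∀ x, ∑ j, (pd j (fun y => ‖w y‖ ^ (3/2:ℝ)) x) ^ 2 = (9/4) * s.indicator G x := by
      intro x
      by_cases hx : w x = 0
      · rw [Set.indicator_of_notMem (by simp [hs_def, hx])]
        simp only [hpd32]
        simp [hx]
      · have hn0 : (0:ℝ) < ‖w x‖ := norm_pos_iff.mpr hx
        rw [Set.indicator_of_mem (show x ∈ s from hx), hG_def]
        show _ = 9/4 * (‖w x‖ * ∑ j, (pd j (fun y => ‖w y‖) x) ^ 2)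
        rw [Finset.mul_sum, Finset.mul_sum]
        refine Finset.sum_congr rfl fun j _ => ?_
        rw [hpd32, hpdn j x hx]
        have hrr : (‖w x‖ ^ (-(1/2):ℝ)) ^ 2 = ‖w x‖⁻¹ := by
          rw [← Real.rpow_natCast (‖w x‖ ^ (-(1/2):ℝ)) 2, ← Real.rpow_mul (norm_nonneg _)]
          norm_num [Real.rpow_neg_one]
        rw [mul_pow, mul_pow, hrr, mul_pow]
        field_simp
        ring
    have hI : ∫ x, ∑ j, (pd j (fun y => ‖w y‖ ^ (3/2:ℝ)) x) ^ 2
        = (9/4) * ∫ x, s.indicator G x := by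
      rw [integral_congr_ae (Filter.Eventually.of_forall hP2), integral_const_mul]
    rw [hI, integral_indicator hs_meas] at *
    rw [← integral_indicator hs_meas]
    rw [show s.indicator (fun x => ‖w x‖ * ∑ j, (pd j (fun y => ‖w y‖) x) ^ 2) = s.indicator G
      from rfl]
    ring
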